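/- Let n ≥ 1, m > 0, β₁, β₂ ∈ ℝ, and let γ : ℝⁿ → ℝⁿ be the rank vector defined by γ_j(s) = n⁻¹ Σ_{i=1}^n p_ij(s), where p_ij(s) = exp(u_ij(s)) / Σ_{k=1}^n exp(u_ik(s)) and u_ij(s) = β₁ s_j + β₂ (s_i − s_j)². Define f(s) = m γ(s) − s. Then f is differentiable at s₀ = (m/n)𝟙 with Jacobian Df(s₀) = (mβ₁/n)(I − n⁻¹E) − I, and for n ≥ 2 all eigenvalues of the symmetric matrix Df(s₀) are strictly negative if and only if β₁ < n/m. -/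

import Mathlib

/-!
At the egalitarian point `s₀ = (m/n)𝟙` all utilities in a row coincide, so every choice
probability equals `1/n` and the quadratic part of the utility has zero derivative. The softmax
derivative `p_ij (du_ij - ∑ₖ p_ik du_ik)` then gives `Dγ(s₀) = (β₁/n)(I - n⁻¹E)`, hence
`Df(s₀) = a I + b E` with `a = mβ₁/n - 1` and `a + n b = -1`. For `n ≥ 2` the spectrum of
`a I + b E` is `{a, a + n b}` (sum-zero vectors and `𝟙`), so stability reduces to `a < 0`.
-/

open Matrix

/-- At a point where all exponents agree, each softmax weight is `1 / card ι`. -/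
theorem hasFDerivAt_exp_div_sum_exp_of_eq {ι E : Type*} [Fintype ι] [NormedAddCommGroup E]
    [NormedSpace ℝ E] {g : ι → E → ℝ} {g' : ι → E →L[ℝ] ℝ} {x : E}
    (hg : ∀ k, HasFDerivAt (g k) (g' k) x) (hconst : ∀ k l, g k x = g l x) (j : ι) :
    HasFDerivAt (fun y => Real.exp (g j y) / ∑ k, Real.exp (g k y))
      ((Fintype.card ι : ℝ)⁻¹ • (g' j - (Fintype.card ι : ℝ)⁻¹ • ∑ k, g' k)) x := by
  set n : ℝ := (Fintype.card ι : ℝ)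
  set c := Real.exp (g j x)
  have hexp : ∀ k, Real.exp (g k x) = c := fun k => by rw [hconst k j]
  have hn : n ≠ 0 := by
    have : Nonempty ι := ⟨j⟩
    positivity
  have hden : HasFDerivAt (fun y => ∑ k, Real.exp (g k y)) (c • ∑ k, g' k) x := by
    refine (HasFDerivAt.fun_sum (u := Finset.univ) fun k _ => (hg k).exp).congr_fderiv ?_
    rw [Finset.smul_sum]
    exact Finset.sum_congr rfl fun k _ => by rw [hexp]
  have hden_val : n * c = ∑ k, Real.exp (g k x) := by simp [n, hexp]
  have hinv : HasFDerivAt (fun y => (∑ k, Real.exp (g k y))⁻¹)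
      (-((n * c) ^ 2)⁻¹ • c • ∑ k, g' k) x :=
    (hasDerivAt_inv (mul_ne_zero hn (Real.exp_pos _).ne')).comp_hasFDerivAt_of_eq x hden hden_val
  simp only [div_eq_mul_inv]
  refine ((hg j).exp.fun_mul hinv).congr_fderiv ?_
  ext v
  simp [← hden_val, c]
  field_simp
  ring

namespace DegreeScore

variable {ι : Type*} [Fintype ι]

def utility (β₁ β₂ : ℝ) (s : ι → ℝ) (i j : ι) : ℝ := β₁ * s j + β₂ * (s i - s j) ^ 2

theorem hasFDerivAt_utility_const (β₁ β₂ c : ℝ) (i k : ι) :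
    HasFDerivAt (fun s => utility β₁ β₂ s i k)
      (β₁ • ContinuousLinearMap.proj (R := ℝ) (φ := fun _ : ι => ℝ) k) (fun _ => c) := by
  have hk := hasFDerivAt_apply (𝕜 := ℝ) k (fun _ : ι => c)
  have hi := hasFDerivAt_apply (𝕜 := ℝ) i (fun _ : ι => c)
  refine ((hk.const_mul β₁).add (((hi.sub hk).pow 2).const_mul β₂)).congr_fderiv ?_
  ext v
  simp

noncomputable def choiceProb (β₁ β₂ : ℝ) (s : ι → ℝ) (i j : ι) : ℝ :=
  Real.exp (utility β₁ β₂ s i j) / ∑ k, Real.exp (utility β₁ β₂ s i k)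

noncomputable def rankVector (β₁ β₂ : ℝ) (s : ι → ℝ) (j : ι) : ℝ :=
  (Fintype.card ι : ℝ)⁻¹ * ∑ i, choiceProb β₁ β₂ s i j

noncomputable def allOnes : (ι → ℝ) →L[ℝ] (ι → ℝ) :=
  ContinuousLinearMap.pi fun _ => ∑ k, ContinuousLinearMap.proj k

theorem hasFDerivAt_rankVector_const (β₁ β₂ c : ℝ) :
    HasFDerivAt (rankVector (ι := ι) β₁ β₂)
      ((β₁ / Fintype.card ι) • (ContinuousLinearMap.id ℝ _ - (Fintype.card ι : ℝ)⁻¹ • allOnes))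
      (fun _ => c) := by
  rw [hasFDerivAt_pi']
  intro j
  have hprob : ∀ i, HasFDerivAt (fun s => choiceProb β₁ β₂ s i j) _ (fun _ => c) := fun i =>
    hasFDerivAt_exp_div_sum_exp_of_eq (fun k => hasFDerivAt_utility_const β₁ β₂ c i k)
      (fun k l => by simp [utility]) j
  refine ((HasFDerivAt.fun_sum (u := Finset.univ) fun i _ => hprob i).const_mul _).congr_fderiv ?_
  have : (Fintype.card ι : ℝ) ≠ 0 := by
    have : Nonempty ι := ⟨j⟩
    positivity
  ext v
  simp [allOnes, ← Finset.mul_sum]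
  field_simp

end DegreeScore

theorem Matrix.mem_spectrum_iff_exists_mulVec_eq_smul {K ι : Type*} [Field K] [Fintype ι]
    [DecidableEq ι] (A : Matrix ι ι K) (μ : K) :
    μ ∈ spectrum K A ↔ ∃ v ≠ 0, A *ᵥ v = μ • v := by
  rw [← Matrix.spectrum_toLin', ← Module.End.hasEigenvalue_iff_mem_spectrum,
    Module.End.hasEigenvalue_iff, Submodule.ne_bot_iff]
  simp only [Module.End.mem_eigenspace_iff, Matrix.toLin'_apply, and_comm]

section AllOnes

variable {K ι : Type*} [Field K] [Fintype ι] [DecidableEq ι]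

theorem Matrix.smul_one_add_smul_allOnes_mulVec_apply (a b : K) (v : ι → K) (i : ι) :
    ((a • 1 + b • of fun _ _ => 1 : Matrix ι ι K) *ᵥ v) i = a * v i + b * ∑ k, v k := by
  simp [mulVec, dotProduct, add_mul, Finset.sum_add_distrib, one_apply, Finset.mul_sum]

theorem Matrix.spectrum_smul_one_add_smul_allOnes (hι : 1 < Fintype.card ι) (a b : K) :
    spectrum K (a • 1 + b • of fun _ _ => 1 : Matrix ι ι K) = {a, a + Fintype.card ι * b} := by
  obtain ⟨i, j, hij⟩ := Fintype.exists_pair_of_one_lt_card hι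
  ext μ
  simp only [mem_spectrum_iff_exists_mulVec_eq_smul, Set.mem_insert_iff, Set.mem_singleton_iff,
    funext_iff, smul_one_add_smul_allOnes_mulVec_apply, Pi.smul_apply, smul_eq_mul]
  constructor
  · rintro ⟨v, hv0, hv⟩
    by_cases hsum : ∑ k, v k = 0
    · left
      obtain ⟨l, hl⟩ := Function.ne_iff.mp hv0
      have hvl := hv l
      rw [hsum, mul_zero, add_zero] at hvl
      exact (mul_right_cancel₀ hl hvl).symm
    · right
      have htotal := Finset.sum_congr rfl fun k (_ : k ∈ Finset.univ) => hv k
      rw [Finset.sum_add_distrib, ← Finset.mul_sum, ← Finset.mul_sum, ← Finset.mul_sum,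
        Finset.sum_const, Finset.card_univ, nsmul_eq_mul] at htotal
      refine (mul_right_cancel₀ hsum ?_).symm
      linear_combination htotal
  · rintro (rfl | rfl)
    · refine ⟨Pi.single i 1 - Pi.single j 1, fun h => ?_, fun k => ?_⟩
      · simpa [hij] using congrFun h i
      · simp [Finset.sum_sub_distrib]
    · refine ⟨fun _ => 1, Function.ne_iff.mpr ⟨i, one_ne_zero⟩, fun k => ?_⟩
      simp [mul_comm]

end AllOnes

open DegreeScore in
theorem degree_score_stability_general (n : ℕ) (m : ℝ) (hm : 0 < m) (β₁ β₂ : ℝ)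
    (u : (Fin n → ℝ) → Fin n → Fin n → ℝ)
    (hu : ∀ s i j, u s i j = β₁ * s j + β₂ * (s i - s j) ^ 2)
    (p : (Fin n → ℝ) → Fin n → Fin n → ℝ)
    (hp : ∀ s i j, p s i j = Real.exp (u s i j) / ∑ k, Real.exp (u s i k))
    (γ : (Fin n → ℝ) → Fin n → ℝ)
    (hγ : ∀ s j, γ s j = (n : ℝ)⁻¹ * ∑ i, p s i j)
    (f : (Fin n → ℝ) → Fin n → ℝ)
    (hf : ∀ s, f s = m • γ s - s)
    (D : Matrix (Fin n) (Fin n) ℝ)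
    (hD : ∀ j l, D j l = (m * β₁ / n) * ((if j = l then (1 : ℝ) else 0) - (n : ℝ)⁻¹)
        - (if j = l then (1 : ℝ) else 0)) :
    DifferentiableAt ℝ f (fun _ => m / n) ∧
      (∀ j l : Fin n, fderiv ℝ f (fun _ => m / n) (Pi.single l 1) j = D j l) ∧
      (2 ≤ n → ((∀ μ ∈ spectrum ℝ D, μ < 0) ↔ β₁ < (n : ℝ) / m)) := by
  have hγ_eq : γ = rankVector β₁ β₂ := by
    funext s j
    simp only [hγ, hp, hu, rankVector, choiceProb, utility, Fintype.card_fin]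
  have hF : HasFDerivAt f
      (m • (β₁ / n) • (ContinuousLinearMap.id ℝ _ - (n : ℝ)⁻¹ • allOnes) -
        ContinuousLinearMap.id ℝ _) (fun _ => m / n) := by
    rw [funext hf, hγ_eq]
    simpa using ((hasFDerivAt_rankVector_const (ι := Fin n) β₁ β₂ (m / n)).const_smul m).sub
      (hasFDerivAt_id _)
  refine ⟨hF.differentiableAt, fun j l => ?_, fun hn => ?_⟩
  · rw [hF.fderiv, hD]
    simp [allOnes, Pi.single_apply]
    ring
  · have hn0 : (0 : ℝ) < n := Nat.cast_pos.mpr (by omega)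
    have hD_eq : D = (m * β₁ / n - 1) • 1 + (-(m * β₁ / n ^ 2)) • of fun _ _ => 1 := by
      ext j l
      rw [hD]
      by_cases h : j = l <;> simp [h, one_apply] <;> ring
    have hsum : m * β₁ / n - 1 + n * (-(m * β₁ / n ^ 2)) = -1 := by
      field_simp
      ring
    rw [hD_eq, spectrum_smul_one_add_smul_allOnes (by rw [Fintype.card_fin]; omega),
      Fintype.card_fin, hsum]
    simp only [Set.mem_insert_iff, Set.mem_singleton_iff, forall_eq_or_imp, forall_eq]
    rw [sub_neg, div_lt_one hn0, lt_div_iff₀ hm, mul_comm]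
    norm_num

/-- **Linear stability for the in-degree score.** For `n ≥ 1`, `m > 0`, and the rank
vector `γ` induced by utilities `u_ij(s) = β₁ s_j + β₂ (s_i − s_j)²`, the drift
`f(s) = m γ(s) − s` is differentiable at `s₀ = (m/n)𝟙` with Jacobian
`Df(s₀) = (mβ₁/n)(I − n⁻¹E) − I`, and for `n ≥ 2` all eigenvalues of this symmetric
matrix are strictly negative iff `β₁ < n/m`. -/
theorem degree_score_stability (n : ℕ) (hn : 1 ≤ n) (m : ℝ) (hm : 0 < m) (β₁ β₂ : ℝ)
    (u : (Fin n → ℝ) → Fin n → Fin n → ℝ)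
    (hu : ∀ s i j, u s i j = β₁ * s j + β₂ * (s i - s j) ^ 2)
    (p : (Fin n → ℝ) → Fin n → Fin n → ℝ)
    (hp : ∀ s i j, p s i j = Real.exp (u s i j) / ∑ k, Real.exp (u s i k))
    (γ : (Fin n → ℝ) → Fin n → ℝ)
    (hγ : ∀ s j, γ s j = (n : ℝ)⁻¹ * ∑ i, p s i j)
    (f : (Fin n → ℝ) → Fin n → ℝ)
    (hf : ∀ s, f s = m • γ s - s)
    (D : Matrix (Fin n) (Fin n) ℝ)
    (hD : ∀ j l, D j l = (m * β₁ / n) * ((if j = l then (1 : ℝ) else 0) - (n : ℝ)⁻¹)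
        - (if j = l then (1 : ℝ) else 0)) :
    DifferentiableAt ℝ f (fun _ => m / n) ∧
      (∀ j l : Fin n, fderiv ℝ f (fun _ => m / n) (Pi.single l 1) j = D j l) ∧
      (2 ≤ n → ((∀ μ ∈ spectrum ℝ D, μ < 0) ↔ β₁ < (n : ℝ) / m)) :=
  degree_score_stability_general n m hm β₁ β₂ u hu p hp γ hγ f hf D hD
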